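/- arXiv:2405.21043 — 4 statements merged into one kernel-verified Lean document; each statement's English description precedes it below -/
import Mathlib

section
/- Let M be a k×d real matrix of full row rank, D a positive diagonal k×k matrix, η > 0 with η ρ(M Mᵀ D) < 1, W a k×k real matrix with ‖W‖ ≤ 1 for some sub-multiplicative matrix norm ‖·‖, and 0 ≤ γ < 1. Then there exists an integer m̄ such that for all m ≥ m̄, the spectral radius of γW + (I − γW)(I − η M Mᵀ D)^m is strictly smaller than 1. -/
open Matrix Filter Topology

noncomputable def specRad {n : Type*} [Fintype n] [DecidableEq n] (A : Matrix n n ℝ) : ℝ :=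
  sSup ((fun z : ℂ => ‖z‖) '' spectrum ℂ (A.map fun x => (x : ℂ)))

/-!
Write `A = M Mᵀ D`. Conjugation by `D^{1/2}` turns `A` into the positive definite matrix
`H = D^{1/2} M Mᵀ D^{1/2}`, whose eigenvalues lie in `(0, 1/η)` because `η ρ(A) < 1`; so the
symmetric matrix `1 - η H` has spectrum in `(-1, 1)`, and the powers of `1 - η H`, hence those of
`P = 1 - η A`, tend to `0`. All norms on a finite-dimensional space being equivalent,
`ν (P ^ m) → 0`, and `ν (γ W + (1 - γ W) P ^ m) ≤ γ + ν (1 - γ W) ν (P ^ m)` is eventually `< 1`.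
Finally `ν B < 1` forces `B ^ n → 0`, since `ν (B ^ n) ≤ ν 1 (ν B) ^ n`, and this confines every
complex eigenvalue of `B` to the open unit disc.
-/

section FiniteDimensional

variable {E : Type*} [NormedAddCommGroup E] [NormedSpace ℝ E] [FiniteDimensional ℝ E]

theorem Seminorm.continuous_of_finiteDimensional (p : Seminorm ℝ E) : Continuous p :=
  p.convexOn.locallyLipschitz.continuous

theorem Seminorm.exists_norm_le_mul (p : Seminorm ℝ E) (hp : ∀ x, p x = 0 → x = 0) :
    ∃ c, ∀ x, ‖x‖ ≤ c * p x := by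
  rcases subsingleton_or_nontrivial E with _ | _
  · exact ⟨0, fun x => by simp [Subsingleton.elim x 0]⟩
  obtain ⟨x₀, hx₀, hmin⟩ := (isCompact_sphere (0 : E) 1).exists_isMinOn
    (NormedSpace.sphere_nonempty.mpr zero_le_one) p.continuous_of_finiteDimensional.continuousOn
  have hpos : 0 < p x₀ :=
    (apply_nonneg p x₀).lt_of_ne' fun h => by simp [hp x₀ h] at hx₀
  refine ⟨(p x₀)⁻¹, fun x => ?_⟩
  rcases eq_or_ne x 0 with rfl | hx
  · simp
  have hx' : 0 < ‖x‖ := norm_pos_iff.mpr hx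
  have : p x₀ ≤ p (‖x‖⁻¹ • x) := hmin (by simp [norm_smul, hx'.ne'])
  rw [map_smul_eq_mul, norm_inv, norm_norm, le_inv_mul_iff₀ hx'] at this
  rwa [le_inv_mul_iff₀ hpos, mul_comm]

theorem Seminorm.tendsto_nhds_zero_of_tendsto {p : Seminorm ℝ E} (hp : ∀ x, p x = 0 → x = 0)
    {ι : Type*} {l : Filter ι} {u : ι → E} (h : Tendsto (fun i => p (u i)) l (𝓝 0)) :
    Tendsto u l (𝓝 0) := by
  obtain ⟨c, hc⟩ := p.exists_norm_le_mul hp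
  rw [tendsto_zero_iff_norm_tendsto_zero]
  exact squeeze_zero (fun _ => norm_nonneg _) (fun i => hc (u i)) (by simpa using h.const_mul c)

end FiniteDimensional

theorem tendsto_pow_nhds_zero_of_seminorm_lt_one {R : Type*} [NormedRing R] [NormedAlgebra ℝ R]
    [FiniteDimensional ℝ R] {p : Seminorm ℝ R} (hp : ∀ x, p x = 0 → x = 0)
    (hmul : ∀ x y, p (x * y) ≤ p x * p y) {a : R} (ha : p a < 1) :
    Tendsto (a ^ ·) atTop (𝓝 0) := by
  have hpow : ∀ n : ℕ, p (a ^ n) ≤ p 1 * p a ^ n := by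
    intro n
    induction n with
    | zero => simp
    | succ n ih =>
      rw [pow_succ, pow_succ, ← mul_assoc]
      exact (hmul _ _).trans (mul_le_mul_of_nonneg_right ih (apply_nonneg p a))
  refine Seminorm.tendsto_nhds_zero_of_tendsto hp (squeeze_zero (fun _ => apply_nonneg _ _) hpow ?_)
  simpa using (tendsto_pow_atTop_nhds_zero_of_lt_one (apply_nonneg p a) ha).const_mul (p 1)

theorem spectrum.norm_lt_one_of_tendsto_pow_nhds_zero {A : Type*} [NormedRing A]
    [NormedAlgebra ℂ A] [CompleteSpace A] {a : A} (ha : Tendsto (a ^ ·) atTop (𝓝 0)) {μ : ℂ}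
    (hμ : μ ∈ spectrum ℂ a) : ‖μ‖ < 1 := by
  have hbound : ∀ n : ℕ, ‖μ‖ ^ n ≤ ‖a ^ n‖ * ‖(1 : A)‖ := fun n => by
    rw [← norm_pow]
    exact spectrum.norm_le_norm_mul_of_mem (spectrum.pow_image_subset a n ⟨μ, hμ, rfl⟩)
  have : Tendsto (‖μ‖ ^ ·) atTop (𝓝 0) :=
    squeeze_zero (fun n => by positivity) hbound (by simpa using ha.norm.mul_const ‖(1 : A)‖)
  simpa using tendsto_pow_atTop_nhds_zero_iff.mp this

theorem abs_lt_one_of_mem_spectrum_one_sub_smul {A : Type*} [Ring A] [Algebra ℝ A] {a : A}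
    {η : ℝ} (hη : η ≠ 0) (ha : ∀ s ∈ spectrum ℝ a, 0 < η * s ∧ η * s < 2) {r : ℝ}
    (hr : r ∈ spectrum ℝ (1 - η • a)) : |r| < 1 := by
  rw [← map_one (algebraMap ℝ A), ← spectrum.singleton_sub_eq, ← Units.val_mk0 hη,
    ← Units.smul_def, spectrum.unit_smul_eq_smul] at hr
  obtain ⟨_, rfl, _, ⟨s, hs, rfl⟩, rfl⟩ := hr
  obtain ⟨hs0, hs2⟩ := ha s hs
  simp only [Units.val_mk0, smul_eq_mul, abs_lt]
  constructor <;> linarith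

section Matrix

variable {n : Type*} [Fintype n] [DecidableEq n]

theorem norm_le_specRad {A : Matrix n n ℝ} {μ : ℂ}
    (hμ : μ ∈ spectrum ℂ (A.map fun x => (x : ℂ))) : ‖μ‖ ≤ specRad A :=
  le_csSup ((Matrix.finite_spectrum _).image _).bddAbove ⟨μ, hμ, rfl⟩

theorem specRad_lt_of_forall_norm_lt {A : Matrix n n ℝ} {r : ℝ} (hr : 0 < r)
    (h : ∀ μ ∈ spectrum ℂ (A.map fun x => (x : ℂ)), ‖μ‖ < r) : specRad A < r := by
  rcases (spectrum ℂ (A.map fun x => (x : ℂ))).eq_empty_or_nonempty with he | hne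
  · simpa [specRad, he] using hr
  · refine (((Matrix.finite_spectrum _).image _).csSup_lt_iff (hne.image _)).mpr ?_
    rintro _ ⟨μ, hμ, rfl⟩
    exact h μ hμ

theorem specRad_lt_one_of_tendsto_pow_nhds_zero {A : Matrix n n ℝ}
    (hA : Tendsto (A ^ ·) atTop (𝓝 0)) : specRad A < 1 := by
  have hmap : Continuous fun X : Matrix n n ℝ => X.map fun x => (x : ℂ) :=
    continuous_id.matrix_map Complex.continuous_ofReal
  have hpow (m : ℕ) : (A ^ m).map (fun x => (x : ℂ)) = (A.map fun x => (x : ℂ)) ^ m :=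
    map_pow Complex.ofRealHom.mapMatrix A m
  have hAc : Tendsto ((A.map fun x => (x : ℂ)) ^ ·) atTop (𝓝 0) := by
    simpa [Function.comp_def, hpow] using (hmap.tendsto 0).comp hA
  let _ : NormedRing (Matrix n n ℂ) := Matrix.linftyOpNormedRing
  let _ : NormedAlgebra ℂ (Matrix n n ℂ) := Matrix.linftyOpNormedAlgebra
  exact specRad_lt_of_forall_norm_lt one_pos fun μ hμ =>
    spectrum.norm_lt_one_of_tendsto_pow_nhds_zero hAc hμ

theorem Matrix.ofReal_mem_spectrum_map {A : Matrix n n ℝ} {r : ℝ} (hr : r ∈ spectrum ℝ A) :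
    (r : ℂ) ∈ spectrum ℂ (A.map fun x => (x : ℂ)) := by
  rw [Matrix.mem_spectrum_iff_isRoot_charpoly] at hr ⊢
  have := hr.map (f := Complex.ofRealHom)
  rwa [← Matrix.charpoly_map] at this

theorem Matrix.IsHermitian.tendsto_pow_nhds_zero {𝕜 : Type*} [RCLike 𝕜] {A : Matrix n n 𝕜}
    (hA : A.IsHermitian) (h : ∀ r ∈ spectrum ℝ A, |r| < 1) : Tendsto (A ^ ·) atTop (𝓝 0) := by
  have hdiag : Tendsto (fun m : ℕ => diagonal (RCLike.ofReal ∘ hA.eigenvalues) ^ m) atTop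
      (𝓝 (0 : Matrix n n 𝕜)) := by
    simp_rw [diagonal_pow, ← diagonal_zero]
    refine (continuous_id.matrix_diagonal.tendsto 0).comp (tendsto_pi_nhds.mpr fun i => ?_)
    refine tendsto_pow_atTop_nhds_zero_of_norm_lt_one ?_
    simpa using h _ (hA.eigenvalues_mem_spectrum_real i)
  set U : Matrix n n 𝕜 := (hA.eigenvectorUnitary : Matrix n n 𝕜)
  have hconj : Continuous fun X : Matrix n n 𝕜 => U * X * star U := by fun_prop
  have hlim := (hconj.tendsto 0).comp hdiag
  rw [Matrix.mul_zero, Matrix.zero_mul] at hlim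
  refine hlim.congr fun m => ?_
  conv_rhs => rw [hA.spectral_theorem]
  rw [← map_pow, Unitary.conjStarAlgAut_apply]
  rfl

theorem Matrix.exists_posDef_conj_eq_mul_transpose_mul_diagonal {m : Type*} [Fintype m]
    {M : Matrix n m ℝ} (hM : IsUnit (M * Mᵀ)) {d : n → ℝ} (hd : ∀ i, 0 < d i) :
    ∃ (u : (Matrix n n ℝ)ˣ) (H : Matrix n n ℝ),
      H.PosDef ∧ M * Mᵀ * diagonal d = (↑u⁻¹ : Matrix n n ℝ) * H * (u : Matrix n n ℝ) := by
  set E : Matrix n n ℝ := diagonal fun i => √(d i)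
  have hE : IsUnit E := by
    simp [E, isUnit_diagonal, Pi.isUnit_iff, fun i => (Real.sqrt_pos.mpr (hd i)).ne']
  have hEE : E * E = diagonal d := by
    simp [E, diagonal_mul_diagonal, fun i => Real.mul_self_sqrt (hd i).le]
  have hH_eq : E * (M * Mᵀ) * E = (E * M) * (E * M)ᴴ := by
    simp [E, conjTranspose_eq_transpose_of_trivial, transpose_mul, Matrix.mul_assoc]
  refine ⟨hE.unit, E * (M * Mᵀ) * E, ?_, ?_⟩
  · have hPSD : (E * (M * Mᵀ) * E).PosSemidef :=
      hH_eq ▸ posSemidef_self_mul_conjTranspose (E * M)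
    exact hPSD.posDef_iff_isUnit.mpr ((hE.mul hM).mul hE)
  · have hinv : (↑hE.unit⁻¹ : Matrix n n ℝ) * E = 1 := hE.unit.inv_mul
    calc M * Mᵀ * diagonal d = (↑hE.unit⁻¹ * E) * (M * Mᵀ) * (E * E) := by
          rw [hinv, one_mul, hEE]
      _ = _ := by simp only [IsUnit.unit_spec, Matrix.mul_assoc]

theorem tendsto_pow_one_sub_smul_mul_transpose_mul_diagonal {m : Type*} [Fintype m]
    {M : Matrix n m ℝ} (hM : IsUnit (M * Mᵀ)) {d : n → ℝ} (hd : ∀ i, 0 < d i) {η : ℝ}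
    (hη : 0 < η) (hρ : η * specRad (M * Mᵀ * diagonal d) < 1) :
    Tendsto (fun j : ℕ => (1 - η • (M * Mᵀ * diagonal d)) ^ j) atTop (𝓝 0) := by
  obtain ⟨u, H, hH, hA⟩ := exists_posDef_conj_eq_mul_transpose_mul_diagonal hM hd
  have hspec : ∀ r ∈ spectrum ℝ H, 0 < η * r ∧ η * r < 2 := by
    intro r hr
    have hrA : r ∈ spectrum ℝ (M * Mᵀ * diagonal d) := by rwa [hA, spectrum.units_conjugate']
    have hr_le : ‖(r : ℂ)‖ ≤ specRad (M * Mᵀ * diagonal d) :=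
      norm_le_specRad (Matrix.ofReal_mem_spectrum_map hrA)
    rw [Complex.norm_real, Real.norm_eq_abs] at hr_le
    rw [hH.isHermitian.spectrum_real_eq_range_eigenvalues] at hr
    obtain ⟨i, rfl⟩ := hr
    refine ⟨mul_pos hη (hH.eigenvalues_pos i), ?_⟩
    nlinarith [le_abs_self (hH.isHermitian.eigenvalues i)]
  have hS : (1 - η • H).IsHermitian :=
    isHermitian_one.sub (hH.isHermitian.smul (IsSelfAdjoint.all η))
  have hconj : Continuous fun X : Matrix n n ℝ =>
      (↑u⁻¹ : Matrix n n ℝ) * X * (u : Matrix n n ℝ) := by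
    fun_prop
  have hlim := (hconj.tendsto 0).comp
    (hS.tendsto_pow_nhds_zero fun _ => abs_lt_one_of_mem_spectrum_one_sub_smul hη.ne' hspec)
  rw [Matrix.mul_zero, Matrix.zero_mul] at hlim
  refine hlim.congr fun j => ?_
  have hP : 1 - η • (M * Mᵀ * diagonal d) =
      (↑u⁻¹ : Matrix n n ℝ) * (1 - η • H) * (u : Matrix n n ℝ) := by
    simp [hA, Matrix.mul_sub, Matrix.sub_mul]
  rw [hP, Units.conj_pow']
  rfl

end Matrix

theorem stmt1 {k d : ℕ} (M : Matrix (Fin k) (Fin d) ℝ) (D : Matrix (Fin k) (Fin k) ℝ)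
    (hM : IsUnit (M * Mᵀ)) (hDdiag : ∀ i j, i ≠ j → D i j = 0) (hDpos : ∀ i, 0 < D i i)
    (η : ℝ) (hη : 0 < η) (hρ : η * specRad (M * Mᵀ * D) < 1)
    (W : Matrix (Fin k) (Fin k) ℝ)
    -- a sub-multiplicative matrix norm ν
    (ν : Matrix (Fin k) (Fin k) ℝ → ℝ)
    (hν0 : ∀ A, ν A = 0 → A = 0)
    (hνadd : ∀ A B, ν (A + B) ≤ ν A + ν B)
    (hνsmul : ∀ (c : ℝ) A, ν (c • A) = |c| * ν A)
    (hνmul : ∀ A B, ν (A * B) ≤ ν A * ν B)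
    (hW : ν W ≤ 1)
    (γ : ℝ) (hγ0 : 0 ≤ γ) (hγ1 : γ < 1) :
    ∃ mbar : ℕ, ∀ m ≥ mbar,
      specRad (γ • W + (1 - γ • W) * (1 - η • (M * Mᵀ * D)) ^ m) < 1 := by
  set P := 1 - η • (M * Mᵀ * D)
  have hD : D = diagonal (diag D) := (IsDiag.diagonal_diag fun i j h => hDdiag i j h).symm
  have hP : Tendsto (P ^ ·) atTop (𝓝 0) := by
    rw [hD] at hρ
    have := tendsto_pow_one_sub_smul_mul_transpose_mul_diagonal (d := diag D) hM hDpos hη hρ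
    rwa [← hD] at this
  -- the ℓ∞ operator norm induces the product topology and serves only as a reference norm
  let νs : Seminorm ℝ (Matrix (Fin k) (Fin k) ℝ) := Seminorm.of ν hνadd hνsmul
  let _ : NormedRing (Matrix (Fin k) (Fin k) ℝ) := Matrix.linftyOpNormedRing
  let _ : NormedAlgebra ℝ (Matrix (Fin k) (Fin k) ℝ) := Matrix.linftyOpNormedAlgebra
  have hνP : Tendsto (fun m : ℕ => ν (P ^ m)) atTop (𝓝 0) := by
    have := (νs.continuous_of_finiteDimensional.tendsto 0).comp hP
    rwa [map_zero] at this
  have hbound (m : ℕ) : ν (γ • W + (1 - γ • W) * P ^ m) ≤ γ + ν (1 - γ • W) * ν (P ^ m) := by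
    refine (hνadd _ _).trans (add_le_add ?_ (hνmul _ _))
    rw [hνsmul, abs_of_nonneg hγ0]
    exact mul_le_of_le_one_right hγ0 hW
  have hlim : Tendsto (fun m : ℕ => γ + ν (1 - γ • W) * ν (P ^ m)) atTop (𝓝 γ) := by
    simpa using (hνP.const_mul _).const_add γ
  obtain ⟨mbar, hmbar⟩ := eventually_atTop.mp (hlim.eventually (gt_mem_nhds hγ1))
  exact ⟨mbar, fun m hm => specRad_lt_one_of_tendsto_pow_nhds_zero
    (tendsto_pow_nhds_zero_of_seminorm_lt_one (p := νs) hν0 hνmul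
      ((hbound m).trans_lt (hmbar m hm)))⟩
end

section
/- Let M ∈ ℝ^{k×d} have full row rank with pseudoinverse M†. For any θ₀ ∈ ℝ^d, the limit of the over-parameterized target TD iterates started from θ₀ equals M†(I − γW)⁻¹ R + (I − M† M + M†(I − γW)⁻¹ γ N (I − M† M)) θ₀, where W = N M†. In particular, the component (I − M†M)θ₀ orthogonal to the row space of M appears in the limit. -/
/-!
Write `Q = M†`, `W = N Q`, `G = 1 - γ W` and `E = (1 - η M Mᵀ D)^m`. Telescoping the geometric
sum `B` gives `η Mᵀ B D = Q (1 - E)`, so one window is the affine map `θ ↦ A θ + Q (1 - E) R` with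
`A = 1 - Q (1 - E) (M - γ N)`. Since `ν` is a submultiplicative norm with `ν (γ W) < 1`, `G` is
invertible, and `(M - γ N) Q G⁻¹ = 1`. Hence `A` is intertwined with `T = γ W + G E` through
`P = Q G⁻¹`, i.e. `A P = P T`, and the claimed limit `L` is a fixed point. The initial error
`θ 0 - L` has no component in the kernel of `M`, so it equals `P u` for some `u`, and
`θ n - L = P Tⁿ u → 0` because `ρ(T) < 1`.
-/

open Matrix Filter Topology

noncomputable def pinv {k d : ℕ} (M : Matrix (Fin k) (Fin d) ℝ) : Matrix (Fin d) (Fin k) ℝ :=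
  Mᵀ * (M * Mᵀ)⁻¹

theorem spectrum.tendsto_pow_atTop_nhds_zero_of_spectralRadius_lt_one {A : Type*} [NormedRing A]
    [NormedAlgebra ℂ A] [CompleteSpace A] {a : A} (ha : spectralRadius ℂ a < 1) :
    Tendsto (a ^ ·) atTop (𝓝 0) := by
  obtain ⟨r, hρr, hr1⟩ := ENNReal.lt_iff_exists_nnreal_btwn.mp ha
  have hbound : ∀ᶠ n : ℕ in atTop, ‖a ^ n‖ ≤ (r : ℝ) ^ n := by
    filter_upwards [(pow_nnnorm_pow_one_div_tendsto_nhds_spectralRadius a).eventually_lt_const hρr,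
      eventually_ge_atTop 1] with n hn (hn1 : 1 ≤ n)
    rw [one_div, ENNReal.rpow_inv_lt_iff (by positivity), ENNReal.rpow_natCast,
      ← ENNReal.coe_pow, ENNReal.coe_lt_coe] at hn
    exact_mod_cast hn.le
  exact squeeze_zero_norm' hbound
    (tendsto_pow_atTop_nhds_zero_of_lt_one r.coe_nonneg (by exact_mod_cast hr1))

theorem Matrix.tendsto_pow_atTop_nhds_zero_of_specRad_lt_one {n : Type*} [Fintype n]
    [DecidableEq n] {A : Matrix n n ℝ} (hA : specRad A < 1) :
    Tendsto (A ^ ·) atTop (𝓝 0) := by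
  let _ := Matrix.linftyOpNormedRing (n := n) (α := ℂ)
  let _ := Matrix.linftyOpNormedAlgebra (n := n) (R := ℂ) (α := ℂ)
  have : CompleteSpace (Matrix n n ℂ) := FiniteDimensional.complete ℂ _
  set B := A.map fun x => (x : ℂ)
  have hρ : spectralRadius ℂ B < 1 := by
    refine lt_of_le_of_lt (iSup₂_le fun z hz => ?_) (ENNReal.ofReal_lt_one.mpr hA)
    rw [← enorm_eq_nnnorm, ← ofReal_norm]
    exact ENNReal.ofReal_le_ofReal (le_csSup (B.finite_spectrum.image _).bddAbove ⟨z, hz, rfl⟩)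
  have hre : Continuous fun X : Matrix n n ℂ => X.map Complex.re :=
    continuous_id.matrix_map Complex.continuous_re
  have hpow : ∀ i : ℕ, (B ^ i).map Complex.re = A ^ i := fun i => by
    have : B ^ i = (A ^ i).map fun x => (x : ℂ) := (map_pow Complex.ofRealHom.mapMatrix A i).symm
    ext
    simp [this]
  simpa [Function.comp_def, hpow] using
    (hre.tendsto 0).comp (spectrum.tendsto_pow_atTop_nhds_zero_of_spectralRadius_lt_one hρ)

theorem Matrix.isUnit_one_sub_smul_of_submultiplicative {n : Type*} [Fintype n] [DecidableEq n]
    (ν : Matrix n n ℝ → ℝ) (hν0 : ∀ A, ν A = 0 → A = 0)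
    (hνadd : ∀ A B, ν (A + B) ≤ ν A + ν B) (hνsmul : ∀ (c : ℝ) A, ν (c • A) = |c| * ν A)
    (hνmul : ∀ A B, ν (A * B) ≤ ν A * ν B) {W : Matrix n n ℝ} (hW : ν W ≤ 1)
    {γ : ℝ} (hγ0 : 0 ≤ γ) (hγ1 : γ < 1) :
    IsUnit (1 - γ • W) := by
  have hν_nonneg : ∀ X, 0 ≤ ν X := fun X => by
    have h := hνadd X ((-1 : ℝ) • X)
    have h0 : ν 0 = 0 := by simpa using hνsmul 0 0
    rw [hνsmul, abs_neg, abs_one, one_mul, neg_one_smul, add_neg_cancel, h0] at h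
    linarith
  have hfix : ∀ X, X = (γ • W) * X → X = 0 := fun X hX => by
    have : ν X ≤ γ * ν X := calc
      ν X = γ * ν (W * X) := by rw [← abs_of_nonneg hγ0, ← hνsmul, ← smul_mul_assoc, ← hX]
      _ ≤ γ * ν X := mul_le_mul_of_nonneg_left
          ((hνmul W X).trans (mul_le_of_le_one_left (hν_nonneg X) hW)) hγ0
    exact hν0 X (by nlinarith [hν_nonneg X])
  rw [isUnit_iff_isUnit_det, isUnit_iff_ne_zero, Ne, ← exists_mulVec_eq_zero_iff]
  rintro ⟨z, hz0, hz⟩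
  rw [sub_mulVec, one_mulVec, sub_eq_zero] at hz
  -- the matrix all of whose columns are `z` is a fixed point of `X ↦ γ W X`
  have hcol := hfix (replicateCol n z) (by rw [← replicateCol_mulVec, ← hz])
  exact hz0 (funext fun i => by simpa using congrFun (congrFun hcol i) i)

theorem mul_geom_sum_one_sub_mul_mul {R : Type*} [Ring R] (K X : R) (m : ℕ) :
    K * (∑ i ∈ Finset.range m, (1 - X * K) ^ i) * X = 1 - (1 - K * X) ^ m := by
  have hK : SemiconjBy K (1 - X * K) (1 - K * X) := by
    simp only [SemiconjBy, mul_sub, sub_mul, mul_one, one_mul, mul_assoc]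
  rw [Finset.mul_sum, Finset.sum_mul]
  simp_rw [(hK.pow_right _).eq, mul_assoc, ← Finset.sum_mul]
  simpa using geom_sum_mul_neg (1 - K * X) m

theorem Matrix.tendsto_of_affine_recurrence {ι κ : Type*} [Fintype ι] [Fintype κ] [DecidableEq κ]
    {A : Matrix ι ι ℝ} {P : Matrix ι κ ℝ} {T : Matrix κ κ ℝ} {b L : ι → ℝ} {θ : ℕ → ι → ℝ}
    (hAP : A * P = P * T) (hT : Tendsto (T ^ ·) atTop (𝓝 0)) (hL : A *ᵥ L + b = L)
    (hθ : ∀ n, θ (n + 1) = A *ᵥ θ n + b) (h0 : ∃ u, θ 0 - L = P *ᵥ u) :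
    Tendsto θ atTop (𝓝 L) := by
  obtain ⟨u, hu⟩ := h0
  have hθ_eq : ∀ n, θ n = P *ᵥ (T ^ n *ᵥ u) + L := by
    intro n
    induction n with
    | zero => rw [pow_zero, one_mulVec, ← hu, sub_add_cancel]
    | succ n ih =>
      rw [hθ, ih, mulVec_add, add_assoc, hL, mulVec_mulVec, mulVec_mulVec, mulVec_mulVec,
        hAP, Matrix.mul_assoc, ← pow_succ']
  have hcont : Continuous fun X : Matrix κ κ ℝ => P *ᵥ (X *ᵥ u) + L := by fun_prop
  rw [show θ = (fun X => P *ᵥ (X *ᵥ u) + L) ∘ (T ^ ·) from funext hθ_eq]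
  simpa using (hcont.tendsto 0).comp hT

theorem mul_pinv {k d : ℕ} {M : Matrix (Fin k) (Fin d) ℝ} (hM : IsUnit (M * Mᵀ)) :
    M * pinv M = 1 := by
  rw [pinv, ← Matrix.mul_assoc, mul_nonsing_inv _ ((isUnit_iff_isUnit_det _).mp hM)]

theorem pinv_mul_mul_transpose {k d : ℕ} {M : Matrix (Fin k) (Fin d) ℝ}
    (hM : IsUnit (M * Mᵀ)) : pinv M * (M * Mᵀ) = Mᵀ := by
  rw [pinv, Matrix.mul_assoc, nonsing_inv_mul _ ((isUnit_iff_isUnit_det _).mp hM), Matrix.mul_one]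

theorem smul_transpose_mul_geom_sum_mul_eq_pinv_mul {k d : ℕ} {M : Matrix (Fin k) (Fin d) ℝ}
    (hM : IsUnit (M * Mᵀ)) (D : Matrix (Fin k) (Fin k) ℝ) (η : ℝ) (m : ℕ) :
    η • (Mᵀ * (∑ i ∈ Finset.range m, (1 - η • (D * M * Mᵀ)) ^ i) * D) =
      pinv M * (1 - (1 - η • (M * Mᵀ * D)) ^ m) := by
  have h := mul_geom_sum_one_sub_mul_mul (M * Mᵀ) (η • D) m
  rw [mul_smul_comm, smul_mul_assoc, ← Matrix.mul_assoc D, mul_smul_comm] at h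
  nth_rw 1 [← pinv_mul_mul_transpose hM]
  rw [← h, Matrix.mul_smul]
  simp only [Matrix.mul_assoc]

section RightInverse

variable {κ ι : Type*} [Fintype κ] [Fintype ι] [DecidableEq κ]
  {M N : Matrix κ ι ℝ} {Q P : Matrix ι κ ℝ} {γ : ℝ}

theorem Matrix.sub_smul_mul_mul_nonsing_inv (hMQ : M * Q = 1) (hG : IsUnit (1 - γ • (N * Q))) :
    (M - γ • N) * (Q * (1 - γ • (N * Q))⁻¹) = 1 := by
  rw [← Matrix.mul_assoc, Matrix.sub_mul, Matrix.smul_mul, hMQ,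
    mul_nonsing_inv _ ((isUnit_iff_isUnit_det _).mp hG)]

theorem Matrix.one_sub_mul_mul_self [DecidableEq ι] (hMQ : M * Q = 1) : (1 - Q * M) * Q = 0 := by
  rw [Matrix.sub_mul, Matrix.one_mul, Matrix.mul_assoc, hMQ, Matrix.mul_one, sub_self]

theorem Matrix.mul_one_sub_mul_self [DecidableEq ι] (hMQ : M * Q = 1) : M * (1 - Q * M) = 0 := by
  rw [Matrix.mul_sub, Matrix.mul_one, ← Matrix.mul_assoc, hMQ, Matrix.one_mul, sub_self]

theorem Matrix.one_sub_mul_mul_sub_smul_mul [DecidableEq ι] (hMP : (M - γ • N) * P = 1)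
    (hPG : P * (1 - γ • (N * Q)) = Q) (E : Matrix κ κ ℝ) :
    (1 - Q * (1 - E) * (M - γ • N)) * P = P * (γ • (N * Q) + (1 - γ • (N * Q)) * E) := by
  have hPW : P * (γ • (N * Q)) = P - Q := calc
    _ = P - P * (1 - γ • (N * Q)) := by rw [Matrix.mul_sub, Matrix.mul_one, sub_sub_cancel]
    _ = P - Q := by rw [hPG]
  rw [Matrix.sub_mul, Matrix.one_mul, Matrix.mul_assoc, hMP, Matrix.mul_one, Matrix.mul_add,
    ← Matrix.mul_assoc, hPG, hPW, Matrix.mul_sub, Matrix.mul_one]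
  abel

theorem Matrix.sub_smul_mulVec_limit [DecidableEq ι] (hMQ : M * Q = 1)
    (hMP : (M - γ • N) * P = 1) (R : κ → ℝ) (θ₀ : ι → ℝ) :
    (M - γ • N) *ᵥ (P *ᵥ R + (1 - Q * M + P * (γ • (N * (1 - Q * M)))) *ᵥ θ₀) = R := by
  have hC : (M - γ • N) * (1 - Q * M + P * (γ • (N * (1 - Q * M)))) = 0 := by
    rw [Matrix.mul_add, Matrix.sub_mul (M := M), mul_one_sub_mul_self hMQ, zero_sub,
      ← Matrix.mul_assoc, hMP, Matrix.one_mul, smul_mul, neg_add_cancel]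
  rw [mulVec_add, mulVec_mulVec, mulVec_mulVec, hMP, hC, one_mulVec, zero_mulVec, add_zero]

theorem Matrix.one_sub_mul_mulVec_sub_limit [DecidableEq ι] (hMQ : M * Q = 1) (X : Matrix κ κ ℝ)
    (R : κ → ℝ) (θ₀ : ι → ℝ) :
    (1 - Q * M) *ᵥ
      (θ₀ - ((Q * X) *ᵥ R + (1 - Q * M + Q * X * (γ • (N * (1 - Q * M)))) *ᵥ θ₀)) = 0 := by
  have hQX : (1 - Q * M) * (Q * X) = 0 := by
    rw [← Matrix.mul_assoc, one_sub_mul_mul_self hMQ, Matrix.zero_mul]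
  have hC : (1 - Q * M) * (1 - Q * M + Q * X * (γ • (N * (1 - Q * M)))) = 1 - Q * M := by
    rw [Matrix.mul_add, ← Matrix.mul_assoc, hQX, Matrix.zero_mul, add_zero,
      Matrix.mul_sub (1 - Q * M), Matrix.mul_one, ← Matrix.mul_assoc, one_sub_mul_mul_self hMQ,
      Matrix.zero_mul, sub_zero]
  rw [mulVec_sub, mulVec_add, mulVec_mulVec, mulVec_mulVec, hQX, hC, zero_mulVec, zero_add,
    sub_self]

end RightInverse

theorem stmt8_general {k d : ℕ} (M N : Matrix (Fin k) (Fin d) ℝ) (D : Matrix (Fin k) (Fin k) ℝ)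
    (hM : IsUnit (M * Mᵀ)) (η : ℝ)
    (ν : Matrix (Fin k) (Fin k) ℝ → ℝ)
    (hν0 : ∀ A, ν A = 0 → A = 0)
    (hνadd : ∀ A B, ν (A + B) ≤ ν A + ν B)
    (hνsmul : ∀ (c : ℝ) A, ν (c • A) = |c| * ν A)
    (hνmul : ∀ A B, ν (A * B) ≤ ν A * ν B)
    (hW : ν (N * pinv M) ≤ 1)
    (γ : ℝ) (hγ0 : 0 ≤ γ) (hγ1 : γ < 1)
    (m : ℕ)
    (hmρ : specRad (γ • (N * pinv M) +
      (1 - γ • (N * pinv M)) * (1 - η • (M * Mᵀ * D)) ^ m) < 1)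
    (R : Fin k → ℝ) (θ : ℕ → Fin d → ℝ)
    (hrec : ∀ n : ℕ, θ (n + 1) =
      (1 - η • (Mᵀ * (∑ i ∈ Finset.range m, (1 - η • (D * M * Mᵀ)) ^ i) * D *
        (M - γ • N))).mulVec (θ n) +
      η • (Mᵀ * (∑ i ∈ Finset.range m, (1 - η • (D * M * Mᵀ)) ^ i) * D).mulVec R) :
    Tendsto θ atTop (nhds
      ((pinv M).mulVec ((1 - γ • (N * pinv M))⁻¹.mulVec R) +
        (1 - pinv M * M +
          pinv M * (1 - γ • (N * pinv M))⁻¹ * (γ • (N * (1 - pinv M * M)))).mulVec (θ 0))) := by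
  set Q := pinv M
  set G := 1 - γ • (N * Q)
  set E := (1 - η • (M * Mᵀ * D)) ^ m
  have hMQ : M * Q = 1 := mul_pinv hM
  have hG : IsUnit G :=
    isUnit_one_sub_smul_of_submultiplicative ν hν0 hνadd hνsmul hνmul hW hγ0 hγ1
  have hMP : (M - γ • N) * (Q * G⁻¹) = 1 := sub_smul_mul_mul_nonsing_inv hMQ hG
  have hPG : Q * G⁻¹ * G = Q := by
    rw [Matrix.mul_assoc, nonsing_inv_mul _ ((isUnit_iff_isUnit_det _).mp hG), Matrix.mul_one]
  set C := 1 - Q * M + Q * G⁻¹ * (γ • (N * (1 - Q * M)))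
  rw [mulVec_mulVec]
  refine tendsto_of_affine_recurrence (b := (Q * (1 - E)) *ᵥ R)
    (one_sub_mul_mul_sub_smul_mul hMP hPG E) (tendsto_pow_atTop_nhds_zero_of_specRad_lt_one hmρ)
    ?_ (fun n => ?_) ?_
  · rw [sub_mulVec, one_mulVec, ← mulVec_mulVec _ (Q * (1 - E)), sub_smul_mulVec_limit hMQ hMP,
      sub_add_cancel]
  · rw [hrec n, ← Matrix.smul_mul, ← smul_mulVec, smul_transpose_mul_geom_sum_mul_eq_pinv_mul hM]
  · refine ⟨(G * M) *ᵥ (θ 0 - ((Q * G⁻¹) *ᵥ R + C *ᵥ θ 0)), ?_⟩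
    have h := one_sub_mul_mulVec_sub_limit (γ := γ) (N := N) hMQ G⁻¹ R (θ 0)
    rw [sub_mulVec, one_mulVec, sub_eq_zero] at h
    rw [mulVec_mulVec, ← Matrix.mul_assoc, hPG, ← h]

theorem stmt8 {k d : ℕ} (M N : Matrix (Fin k) (Fin d) ℝ) (D : Matrix (Fin k) (Fin k) ℝ)
    (hM : IsUnit (M * Mᵀ)) (hDdiag : ∀ i j, i ≠ j → D i j = 0) (hDpos : ∀ i, 0 < D i i)
    (η : ℝ) (hη : 0 < η) (hρ : η * specRad (M * Mᵀ * D) < 1)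
    (ν : Matrix (Fin k) (Fin k) ℝ → ℝ)
    (hν0 : ∀ A, ν A = 0 → A = 0)
    (hνadd : ∀ A B, ν (A + B) ≤ ν A + ν B)
    (hνsmul : ∀ (c : ℝ) A, ν (c • A) = |c| * ν A)
    (hνmul : ∀ A B, ν (A * B) ≤ ν A * ν B)
    (hW : ν (N * pinv M) ≤ 1)
    (γ : ℝ) (hγ0 : 0 ≤ γ) (hγ1 : γ < 1)
    (m : ℕ) (hm : 1 ≤ m)
    (hmρ : specRad (γ • (N * pinv M) +
      (1 - γ • (N * pinv M)) * (1 - η • (M * Mᵀ * D)) ^ m) < 1)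
    (R : Fin k → ℝ) (θ : ℕ → Fin d → ℝ)
    (hrec : ∀ n : ℕ, θ (n + 1) =
      (1 - η • (Mᵀ * (∑ i ∈ Finset.range m, (1 - η • (D * M * Mᵀ)) ^ i) * D *
        (M - γ • N))).mulVec (θ n) +
      η • (Mᵀ * (∑ i ∈ Finset.range m, (1 - η • (D * M * Mᵀ)) ^ i) * D).mulVec R) :
    Tendsto θ atTop (nhds
      ((pinv M).mulVec ((1 - γ • (N * pinv M))⁻¹.mulVec R) +
        (1 - pinv M * M +
          pinv M * (1 - γ • (N * pinv M))⁻¹ * (γ • (N * (1 - pinv M * M)))).mulVec (θ 0))) :=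
  stmt8_general M N D hM η ν hν0 hνadd hνsmul hνmul hW γ hγ0 hγ1 m hmρ R θ hrec
end

section
/- Suppose feature vectors are orthonormal so that M Mᵀ = I_k, N M† = H P̂ Hᵀ where H P̂ Hᵀ is a substochastic matrix, D_k = (1/k) I_k (uniform empirical distribution), and 0 ≤ γ < 1. Then for any 0 < η ≤ k, the spectral radius of I − η (M − γN) Mᵀ D_k is strictly less than 1. -/
open Matrix

/-!
The iteration matrix equals `(1 - η/k) • 1 + (ηγ/k) • S` with `S = N Mᵀ = N M†` substochastic.
Its spectral radius is bounded by its `ℓ∞` operator norm (maximal absolute row sum), and by the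
triangle inequality that norm is at most `(1 - η/k) + γη/k < 1`.
-/

attribute [local instance] Matrix.linftyOpNormedAddCommGroup Matrix.linftyOpNormedRing
  Matrix.linftyOpNormedAlgebra

section LinftyOpNorm

variable {m n : Type*} [Fintype m] [Fintype n]

theorem linfty_opNorm_map_ofReal (A : Matrix m n ℝ) : ‖A.map ((↑) : ℝ → ℂ)‖ = ‖A‖ := by
  simp [linfty_opNorm_def]

theorem linfty_opNorm_le_one_of_substochastic (S : Matrix m n ℝ) (h0 : ∀ i j, 0 ≤ S i j)
    (h1 : ∀ i, ∑ j, S i j ≤ 1) : ‖S‖ ≤ 1 := by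
  rw [linfty_opNorm_def, ← NNReal.coe_one, NNReal.coe_le_coe]
  refine Finset.sup_le fun i _ => ?_
  rw [← NNReal.coe_le_coe, NNReal.coe_sum, NNReal.coe_one]
  simpa only [coe_nnnorm, Real.norm_of_nonneg (h0 i _)] using h1 i

theorem specRad_le_linfty_opNorm [DecidableEq n] [Nonempty n] (A : Matrix n n ℝ) :
    specRad A ≤ ‖A‖ := by
  refine Real.sSup_le ?_ (norm_nonneg A)
  rintro _ ⟨z, hz, rfl⟩
  exact (spectrum.norm_le_norm_of_mem hz).trans_eq (linfty_opNorm_map_ofReal A)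

end LinftyOpNorm

theorem pinv_eq_transpose {k d : ℕ} {M : Matrix (Fin k) (Fin d) ℝ} (h : M * Mᵀ = 1) :
    pinv M = Mᵀ := by
  rw [pinv, h, inv_one, Matrix.mul_one]

theorem one_sub_smul_sub_mul_transpose_smul_one {m n : Type*} [Fintype m] [Fintype n]
    [DecidableEq m] {M N : Matrix m n ℝ} (h : M * Mᵀ = 1) (η γ c : ℝ) :
    1 - η • ((M - γ • N) * Mᵀ * (c • 1)) = (1 - η * c) • 1 + (η * γ * c) • (N * Mᵀ) := by
  rw [Matrix.mul_smul, Matrix.mul_one, Matrix.sub_mul, Matrix.smul_mul, h]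
  module

theorem norm_smul_one_add_smul_le {A : Type*} [NormedRing A] [NormedAlgebra ℝ A] [NormOneClass A]
    {a b : ℝ} (ha : 0 ≤ a) (hb : 0 ≤ b) {x : A} (hx : ‖x‖ ≤ 1) :
    ‖a • (1 : A) + b • x‖ ≤ a + b :=
  calc ‖a • (1 : A) + b • x‖ ≤ a * ‖(1 : A)‖ + b * ‖x‖ := by
        simpa only [norm_smul, Real.norm_of_nonneg ha, Real.norm_of_nonneg hb]
          using norm_add_le (a • (1 : A)) (b • x)
    _ ≤ a + b := by rw [norm_one, mul_one]; exact add_le_add_right (mul_le_of_le_one_right hb hx) a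

theorem stmt17 {k d : ℕ} (hk : 0 < k) (M N : Matrix (Fin k) (Fin d) ℝ)
    (horth : M * Mᵀ = 1)
    -- N M† is a substochastic matrix (= H P̂ Hᵀ)
    (hsub0 : ∀ i j, 0 ≤ (N * pinv M) i j)
    (hsub1 : ∀ i, ∑ j, (N * pinv M) i j ≤ 1)
    (γ : ℝ) (hγ0 : 0 ≤ γ) (hγ1 : γ < 1)
    (η : ℝ) (hη0 : 0 < η) (hηk : η ≤ (k : ℝ)) :
    specRad (1 - η • ((M - γ • N) * Mᵀ * ((k : ℝ)⁻¹ • 1))) < 1 := by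
  have : Nonempty (Fin k) := ⟨⟨0, hk⟩⟩
  have hk' : (0 : ℝ) < k := Nat.cast_pos.mpr hk
  have hS : ‖N * Mᵀ‖ ≤ 1 := by
    rw [← pinv_eq_transpose horth]
    exact linfty_opNorm_le_one_of_substochastic _ hsub0 hsub1
  have hstep : η * (k : ℝ)⁻¹ ≤ 1 := by rw [← div_eq_mul_inv]; exact (div_le_one hk').mpr hηk
  have hdiscount : η * γ * (k : ℝ)⁻¹ < η * (k : ℝ)⁻¹ := by
    rw [mul_right_comm]; exact mul_lt_of_lt_one_right (by positivity) hγ1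
  rw [one_sub_smul_sub_mul_transpose_smul_one horth]
  calc _ ≤ _ := specRad_le_linfty_opNorm _
    _ ≤ (1 - η * (k : ℝ)⁻¹) + η * γ * (k : ℝ)⁻¹ :=
        norm_smul_one_add_smul_le (sub_nonneg.mpr hstep) (by positivity) hS
    _ < 1 := by linarith
end

section
/- Consider the two-state example with feature matrix Φ = (1, 2)ᵀ, transition matrix P = [[0,1],[0,1]], reward r = 0, discount γ > 1/2, and state distribution d = ((4γ−4)/(2γ−3), (1−2γ)/(2γ−3)). Then d is a valid probability distribution (nonnegative entries summing to 1), and Φᵀ D (I − γP) Φ = 0 where D = diag(d); hence the under-parameterized TD fixed point (Φᵀ D (I − γP) Φ)⁻¹ Φᵀ D r does not exist. -/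
open Matrix

theorem td_matrix_absorbing_two_state (γ a b d₁ d₂ : ℝ) :
    !![a; b]ᵀ * diagonal ![d₁, d₂] * (1 - γ • !![(0 : ℝ), 1; 0, 1]) * !![a; b] =
      !![d₁ * a * (a - γ * b) + d₂ * b * (b - γ * b)] := by
  ext i j
  fin_cases i; fin_cases j
  simp [mul_apply, Fin.sum_univ_succ, one_apply]
  ring

theorem counterexample_weights_nonneg_and_sum_eq_one {γ : ℝ} (hγ : 1 / 2 ≤ γ) (hγ1 : γ ≤ 1) :
    0 ≤ (4 * γ - 4) / (2 * γ - 3) ∧ 0 ≤ (1 - 2 * γ) / (2 * γ - 3) ∧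
      (4 * γ - 4) / (2 * γ - 3) + (1 - 2 * γ) / (2 * γ - 3) = 1 := by
  have hden : 2 * γ - 3 < 0 := by linarith
  refine ⟨div_nonneg_of_nonpos (by linarith) hden.le,
    div_nonneg_of_nonpos (by linarith) hden.le, ?_⟩
  rw [← add_div, div_eq_one_iff_eq hden.ne]
  ring

/-- Both summands are multiples of `(1 - 2γ) / (2γ - 3)`, with opposite coefficients
`4γ - 4` and `4 - 4γ`; this is how the weights were chosen. -/
theorem counterexample_weights_td_cancel (γ : ℝ) :
    (4 * γ - 4) / (2 * γ - 3) * 1 * (1 - γ * 2) + (1 - 2 * γ) / (2 * γ - 3) * 2 * (2 - γ * 2) = 0 := by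
  rw [div_mul_eq_mul_div, div_mul_eq_mul_div, div_mul_eq_mul_div, div_mul_eq_mul_div,
    ← add_div, div_eq_zero_iff]
  left
  ring

theorem stmt18 (γ : ℝ) (hγ : 1 / 2 < γ) (hγ1 : γ < 1)
    (Φ : Matrix (Fin 2) (Fin 1) ℝ) (hΦ : Φ = !![1; 2])
    (P : Matrix (Fin 2) (Fin 2) ℝ) (hP : P = !![0, 1; 0, 1])
    (d₁ d₂ : ℝ) (hd₁ : d₁ = (4 * γ - 4) / (2 * γ - 3)) (hd₂ : d₂ = (1 - 2 * γ) / (2 * γ - 3))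
    (D : Matrix (Fin 2) (Fin 2) ℝ) (hD : D = Matrix.diagonal ![d₁, d₂]) :
    0 ≤ d₁ ∧ 0 ≤ d₂ ∧ d₁ + d₂ = 1 ∧
    Φᵀ * D * (1 - γ • P) * Φ = 0 ∧
    ¬ IsUnit (Φᵀ * D * (1 - γ • P) * Φ) := by
  obtain ⟨hd₁_nonneg, hd₂_nonneg, hd_sum⟩ := hd₁ ▸ hd₂ ▸
    counterexample_weights_nonneg_and_sum_eq_one hγ.le hγ1.le
  have hzero : Φᵀ * D * (1 - γ • P) * Φ = 0 := by
    have h := td_matrix_absorbing_two_state γ 1 2 d₁ d₂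
    rw [hΦ, hP, hD, h]
    ext i j
    fin_cases i; fin_cases j
    simpa [hd₁, hd₂] using counterexample_weights_td_cancel γ
  exact ⟨hd₁_nonneg, hd₂_nonneg, hd_sum, hzero, hzero ▸ not_isUnit_zero⟩
end
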